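/- Let Q be an n×n Stieltjes matrix with inverse Q⁻¹ = V V⊤ where V is the (upper-triangular, with respect to the order of a permutation π of [n]) Cholesky-type factor, with columns v_1, …, v_n such that (v_k)_{π_i} = 0 for i > k. Then for each k, v_k v_k⊤ = R(π_k; S_{k-1}^π), i.e., the rank-one increments of the restricted inverses along the chain S_0^π ⊂ S_1^π ⊂ … ⊂ S_n^π are exactly the outer products of the columns of V. -/

import Mathlib

open Matrix
open scoped Classical

/-- The Moore–Penrose pseudoinverse of a real square matrix, defined via its four
characterizing equations (and `0` if no such matrix exists; by uniqueness of the
Moore–Penrose pseudoinverse, when it exists this definition picks it out). -/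
noncomputable def pinv {m : Type*} [Fintype m] [DecidableEq m]
    (A : Matrix m m ℝ) : Matrix m m ℝ :=
  if h : ∃ B : Matrix m m ℝ,
      A * B * A = A ∧ B * A * B = B ∧ (A * B)ᵀ = A * B ∧ (B * A)ᵀ = B * A
  then h.choose else 0

/-- `Q ∘ e_S e_Sᵀ`: the matrix agreeing with `Q` on entries indexed by `S × S`,
and zero elsewhere. -/
def mask {n : ℕ} (Q : Matrix (Fin n) (Fin n) ℝ) (S : Finset (Fin n)) :
    Matrix (Fin n) (Fin n) ℝ :=
  Matrix.of fun i j => if i ∈ S ∧ j ∈ S then Q i j else 0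

/-- `S_k^π = {π_1, …, π_k}`, the image under the permutation `π` of the first `k`
positions (`S_0^π = ∅`). -/
def Sk {n : ℕ} (π : Equiv.Perm (Fin n)) (k : ℕ) : Finset (Fin n) :=
  (Finset.univ.filter fun i : Fin n => (i : ℕ) < k).image π

/-- `R(π_{k+1}; S_k^π)`: the increment of the restricted pseudoinverses along the chain. -/
noncomputable def Rinc {n : ℕ} (Q : Matrix (Fin n) (Fin n) ℝ) (π : Equiv.Perm (Fin n))
    (k : ℕ) : Matrix (Fin n) (Fin n) ℝ :=
  pinv (mask Q (Sk π (k + 1))) - pinv (mask Q (Sk π k))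

/-!
Since `Q V Vᵀ = 1`, the matrix `Q V = V⁻ᵀ` is lower triangular in the order given by `π`, so a
row of `Q V` indexed by `S_K` vanishes beyond column `K`. Let `D_K = coordProj (Sk 1 K)` be the
projection onto the first `K` coordinates. Then `B_K = V D_K Vᵀ = ∑_{j < K} v_j v_jᵀ` is supported
on `S_K × S_K` (as `V` is triangular) and satisfies `(Q ∘ e_S e_Sᵀ) B_K = e_S e_Sᵀ` for `S = S_K`;
with symmetry these give the Penrose equations, so `B_K` is the pseudoinverse of `Q ∘ e_S e_Sᵀ`,
and consecutive differences are `V (D_{k+1} - D_k) Vᵀ = v_k v_kᵀ`.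
-/
lemma pinv_eq_of_penrose {m : Type*} [Fintype m] [DecidableEq m] {A B : Matrix m m ℝ}
    (h₁ : A * B * A = A) (h₂ : B * A * B = B) (h₃ : (A * B)ᵀ = A * B)
    (h₄ : (B * A)ᵀ = B * A) : pinv A = B := by
  have hex : ∃ C : Matrix m m ℝ,
      A * C * A = A ∧ C * A * C = C ∧ (A * C)ᵀ = A * C ∧ (C * A)ᵀ = C * A :=
    ⟨B, h₁, h₂, h₃, h₄⟩
  rw [pinv, dif_pos hex]
  obtain ⟨c₁, c₂, c₃, c₄⟩ := hex.choose_spec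
  set C := hex.choose
  have hAC : A * C = A * B :=
    calc A * C = (A * B)ᵀ * (A * C)ᵀ := by rw [h₃, c₃, ← Matrix.mul_assoc, h₁]
    _ = Bᵀ * (A * C * A)ᵀ := by simp only [transpose_mul, Matrix.mul_assoc]
    _ = A * B := by rw [c₁, ← transpose_mul, h₃]
  have hCA : C * A = B * A :=
    calc C * A = (C * A)ᵀ * (B * A)ᵀ := by
          rw [c₄, h₄, ← Matrix.mul_assoc, Matrix.mul_assoc C A B, Matrix.mul_assoc C, h₁]
    _ = (A * C * A)ᵀ * Bᵀ := by simp only [transpose_mul, Matrix.mul_assoc]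
    _ = B * A := by rw [c₁, ← transpose_mul, h₄]
  calc C = C * A * C := c₂.symm
  _ = B * A * B := by rw [Matrix.mul_assoc, hAC, ← Matrix.mul_assoc, hCA]
  _ = B := h₂

lemma pinv_eq_of_mul_eq {m : Type*} [Fintype m] [DecidableEq m] {A B P : Matrix m m ℝ}
    (hA : Aᵀ = A) (hB : Bᵀ = B) (hP : Pᵀ = P) (hAB : A * B = P) (hPA : P * A = A)
    (hPB : P * B = B) : pinv A = B := by
  have hBA : B * A = P := by rw [← hA, ← hB, ← transpose_mul, hAB, hP]
  exact pinv_eq_of_penrose (by rw [hAB, hPA]) (by rw [hBA, hPB]) (by rw [hAB, hP])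
    (by rw [hBA, hP])

lemma Matrix.BlockTriangular.nonsing_inv {m R α : Type*} [Fintype m] [DecidableEq m]
    [CommRing R] [LinearOrder α] {M : Matrix m m R} {b : m → α} (hM : M.BlockTriangular b) :
    M⁻¹.BlockTriangular b := by
  by_cases h : IsUnit M.det
  · have := M.invertibleOfIsUnitDet h
    exact blockTriangular_inv_of_blockTriangular hM
  · rw [nonsing_inv_apply_not_isUnit M h]
    exact blockTriangular_zero

lemma mul_single_mul_transpose {m R : Type*} [Fintype m] [DecidableEq m] [CommRing R]
    (V : Matrix m m R) (k : m) :
    V * single k k 1 * Vᵀ = vecMulVec (fun i => V i k) (fun i => V i k) := by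
  ext i j
  simp [mul_apply, single_apply, vecMulVec_apply, ite_and, Finset.sum_ite_eq]

section coordProj

variable {ι : Type*} [DecidableEq ι]

def coordProj (S : Finset ι) : Matrix ι ι ℝ :=
  diagonal fun i => if i ∈ S then 1 else 0

lemma coordProj_transpose (S : Finset ι) : (coordProj S)ᵀ = coordProj S :=
  diagonal_transpose _

lemma coordProj_mul_self [Fintype ι] (S : Finset ι) :
    coordProj S * coordProj S = coordProj S := by
  simp [coordProj, diagonal_mul_diagonal]

lemma coordProj_mul_mul_coordProj_eq_right [Fintype ι] {S T : Finset ι} {M : Matrix ι ι ℝ}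
    (h : ∀ i j, i ∉ S → j ∈ T → M i j = 0) :
    coordProj S * M * coordProj T = M * coordProj T := by
  ext i j
  by_cases hi : i ∈ S <;> by_cases hj : j ∈ T <;> simp [coordProj, hi, hj, h]

lemma coordProj_mul_mul_coordProj_eq_left [Fintype ι] {S T : Finset ι} {M : Matrix ι ι ℝ}
    (h : ∀ i j, i ∈ S → j ∉ T → M i j = 0) :
    coordProj S * M * coordProj T = coordProj S * M := by
  ext i j
  by_cases hi : i ∈ S <;> by_cases hj : j ∈ T <;> simp [coordProj, hi, hj, h]

end coordProj

lemma mask_eq_coordProj_mul_mul {n : ℕ} (Q : Matrix (Fin n) (Fin n) ℝ) (S : Finset (Fin n)) :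
    mask Q S = coordProj S * Q * coordProj S := by
  ext i j
  by_cases hi : i ∈ S <;> by_cases hj : j ∈ S <;> simp [mask, coordProj, hi, hj]

lemma mem_Sk {n : ℕ} {π : Equiv.Perm (Fin n)} {k : ℕ} {i : Fin n} :
    i ∈ Sk π k ↔ ((π.symm i : Fin n) : ℕ) < k := by
  simp only [Sk, Finset.mem_image, Finset.mem_filter, Finset.mem_univ, true_and]
  exact ⟨fun ⟨a, ha, hai⟩ => by simpa [← hai] using ha, fun h => ⟨π.symm i, h, by simp⟩⟩

lemma mem_Sk_one {n : ℕ} {k : ℕ} {i : Fin n} : i ∈ Sk 1 k ↔ (i : ℕ) < k :=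
  mem_Sk

lemma coordProj_Sk_one_succ_sub {n : ℕ} (k : Fin n) :
    coordProj (Sk 1 (k + 1)) - coordProj (Sk 1 k) = single k k (1 : ℝ) := by
  ext i j
  simp only [coordProj, mem_Sk_one, Matrix.sub_apply, diagonal_apply, single_apply]
  split_ifs <;> first | omega | simp_all [Fin.ext_iff]

section Triangular

variable {n : ℕ} {Q V : Matrix (Fin n) (Fin n) ℝ} {π : Equiv.Perm (Fin n)}

lemma inv_apply_eq_zero_of_lt (hV : (V.submatrix π id).BlockTriangular id) {i j : Fin n}
    (h : π.symm i < j) : V⁻¹ j i = 0 := by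
  have hV' : (V.submatrix π (Equiv.refl _)).BlockTriangular id := hV
  have := hV'.nonsing_inv h
  rwa [inv_submatrix_equiv, submatrix_apply, Equiv.apply_symm_apply] at this

lemma mul_apply_eq_zero_of_lt (hQV : Q * (V * Vᵀ) = 1)
    (hV : (V.submatrix π id).BlockTriangular id) {i j : Fin n} (h : π.symm i < j) :
    (Q * V) i j = 0 := by
  have hinv : Vᵀ⁻¹ = Q * V := inv_eq_left_inv (by rw [Matrix.mul_assoc, hQV])
  rw [← hinv, ← transpose_nonsing_inv, transpose_apply, inv_apply_eq_zero_of_lt hV h]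

lemma pinv_mask_Sk (hQV : Q * (V * Vᵀ) = 1) (hV : (V.submatrix π id).BlockTriangular id)
    (K : ℕ) : pinv (mask Q (Sk π K)) = V * coordProj (Sk 1 K) * Vᵀ := by
  set P := coordProj (Sk π K)
  set D := coordProj (Sk 1 K)
  have hQ : Qᵀ = Q := by
    rw [← inv_eq_left_inv hQV, transpose_nonsing_inv, transpose_mul, transpose_transpose]
  have hPV : P * V * D = V * D := coordProj_mul_mul_coordProj_eq_right fun i j hi hj => by
    rw [mem_Sk] at hi
    rw [mem_Sk_one] at hj
    simpa using hV (i := π.symm i) (j := j) (Fin.lt_def.2 (by omega) : j < π.symm i)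
  have hPQV : P * (Q * V) * D = P * (Q * V) :=
    coordProj_mul_mul_coordProj_eq_left fun i j hi hj => by
      rw [mem_Sk] at hi
      rw [mem_Sk_one] at hj
      exact mul_apply_eq_zero_of_lt hQV hV (by rw [Fin.lt_def]; omega)
  rw [mask_eq_coordProj_mul_mul]
  refine pinv_eq_of_mul_eq (P := P) ?_ ?_ (coordProj_transpose _) ?_ ?_ ?_
  · simp only [transpose_mul, coordProj_transpose, hQ, Matrix.mul_assoc]
  · simp only [transpose_mul, D, coordProj_transpose, transpose_transpose, Matrix.mul_assoc]
  · calc P * Q * P * (V * D * Vᵀ) = P * Q * (P * V * D) * Vᵀ := by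
          simp only [Matrix.mul_assoc]
    _ = P * (Q * V) * D * Vᵀ := by rw [hPV]; simp only [Matrix.mul_assoc]
    _ = P := by rw [hPQV, Matrix.mul_assoc, Matrix.mul_assoc, hQV, Matrix.mul_one]
  · rw [← Matrix.mul_assoc, ← Matrix.mul_assoc, coordProj_mul_self]
  · rw [← Matrix.mul_assoc, ← Matrix.mul_assoc, hPV]

end Triangular

theorem stmt17_general {n : ℕ} (Q : Matrix (Fin n) (Fin n) ℝ)
    (hQ : Q.PosDef)
    (π : Equiv.Perm (Fin n)) (V : Matrix (Fin n) (Fin n) ℝ)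
    (hV : Q⁻¹ = V * Vᵀ)
    (htri : ∀ k i : Fin n, k < i → V (π i) k = 0) :
    ∀ k : Fin n, vecMulVec (fun i => V i k) (fun i => V i k) = Rinc Q π k := by
  intro k
  have hQV : Q * (V * Vᵀ) = 1 := by
    rw [← hV]
    exact Q.mul_nonsing_inv ((Q.isUnit_iff_isUnit_det).1 hQ.isUnit)
  have hU : (V.submatrix π id).BlockTriangular id := fun i j h => htri j i h
  rw [Rinc, pinv_mask_Sk hQV hU, pinv_mask_Sk hQV hU, ← Matrix.sub_mul, ← Matrix.mul_sub,
    coordProj_Sk_one_succ_sub, mul_single_mul_transpose]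

/-- if `Q⁻¹ = V Vᵀ` with `V` upper triangular with respect to the order given by
the permutation `π` (i.e., `V (π i) k = 0` whenever `i > k`), then the outer product of the
`k`-th column of `V` with itself equals the increment `R(π_k; S_{k-1}^π)` of the restricted
pseudoinverses along the chain `S_0^π ⊂ S_1^π ⊂ … ⊂ S_n^π`. -/
theorem stmt17 {n : ℕ} (Q : Matrix (Fin n) (Fin n) ℝ)
    (hQ : Q.PosDef) (hoff : ∀ i j : Fin n, i ≠ j → Q i j ≤ 0)
    (π : Equiv.Perm (Fin n)) (V : Matrix (Fin n) (Fin n) ℝ)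
    (hV : Q⁻¹ = V * Vᵀ)
    (htri : ∀ k i : Fin n, k < i → V (π i) k = 0) :
    ∀ k : Fin n, vecMulVec (fun i => V i k) (fun i => V i k) = Rinc Q π k :=
  stmt17_general Q hQ π V hV htri
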